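/- arXiv:2502.17009 — 4 statements merged into one kernel-verified Lean document; each statement's English description precedes it below -/
import Mathlib

section
/- Let f : ℝ^d → ℝ be differentiable with L-Lipschitz gradient and infimum f_* > -∞, and fix x ∈ ℝ^d. Let (Ω, μ) and (Ω', μ') be probability spaces. Let g : Ω → ℝ^d be square-integrable with ∫ g dμ = ∇f(x) and ∫ ‖g − ∇f(x)‖₂² dμ ≤ 𝓛σ. Let 𝒞 : ℝ^d × Ω' → ℝ^d be measurable with ∫ 𝒞(y, ·) dμ' = y and ∫ ‖𝒞(y, ·) − y‖₂² dμ' ≤ ω·‖y‖₂² for every y ∈ ℝ^d, where ω ≥ 0. Then ∫∫ ‖𝒞(g(ω), ω') − ∇f(x)‖₂² dμ'(ω') dμ(ω) ≤ 2ωL·(f(x) − f_*) + (ω + 1)·𝓛σ. -/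
/-!
Conditioning on the sample `g ω = y`, the compressor's bias-variance decomposition gives
`E‖𝒞(y) - ∇f(x)‖² ≤ ‖y - ∇f(x)‖² + ω‖y‖²`. Averaging over `y = g ω` and decomposing
`E‖g‖² = ‖∇f(x)‖² + E‖g - ∇f(x)‖²` bounds the left side by `(ω + 1) 𝓛σ + ω‖∇f(x)‖²`.
Finally, a gradient step of length `1/L` from `x` decreases `f` by at least `‖∇f(x)‖²/(2L)`
(descent lemma), and it cannot go below `f_*`, so `‖∇f(x)‖² ≤ 2L(f(x) - f_*)`.
-/

open MeasureTheory RealInnerProductSpace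

section InnerProductSpace

variable {E : Type*} [NormedAddCommGroup E] [InnerProductSpace ℝ E] [CompleteSpace E]

theorem le_add_inner_gradient_add_sq_of_lipschitzWith_gradient {f : E → ℝ} {K : NNReal}
    (hf : Differentiable ℝ f) (hlip : LipschitzWith K (gradient f)) (x y : E) :
    f y ≤ f x + ⟪gradient f x, y - x⟫ + K / 2 * ‖y - x‖ ^ 2 := by
  set v := y - x
  have hderiv (t : ℝ) : HasDerivAt (fun t : ℝ => f (x + t • v) - t * ⟪gradient f x, v⟫)
      (⟪gradient f (x + t • v), v⟫ - ⟪gradient f x, v⟫) t := by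
    have hline : HasDerivAt (fun t : ℝ => x + t • v) v t := by
      simpa using ((hasDerivAt_id t).smul_const v).const_add x
    exact ((hf _).hasGradientAt.hasFDerivAt.comp_hasDerivAt t hline).sub
      (by simpa using (hasDerivAt_id t).mul_const ⟪gradient f x, v⟫)
  have hbound (t : ℝ) (ht : 0 ≤ t) :
      ⟪gradient f (x + t • v), v⟫ - ⟪gradient f x, v⟫ ≤ K * t * ‖v‖ ^ 2 := by
    have hgrad : ‖gradient f (x + t • v) - gradient f x‖ ≤ K * (t * ‖v‖) := by
      simpa [dist_eq_norm, norm_smul, abs_of_nonneg ht] using hlip.dist_le_mul (x + t • v) x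
    calc _ = ⟪gradient f (x + t • v) - gradient f x, v⟫ := (inner_sub_left _ _ _).symm
      _ ≤ ‖gradient f (x + t • v) - gradient f x‖ * ‖v‖ := real_inner_le_norm _ _
      _ ≤ K * (t * ‖v‖) * ‖v‖ := by gcongr
      _ = K * t * ‖v‖ ^ 2 := by ring
  have hparabola (t : ℝ) :
      HasDerivAt (fun t : ℝ => f x + K / 2 * t ^ 2 * ‖v‖ ^ 2) (K * t * ‖v‖ ^ 2) t := by
    refine ((((hasDerivAt_pow 2 t).const_mul (K / 2 : ℝ)).mul_const (‖v‖ ^ 2)).const_add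
      (f x)).congr_deriv ?_
    simp only [Nat.cast_ofNat, Nat.add_one_sub_one, pow_one]
    ring
  have hcompare := image_le_of_deriv_right_le_deriv_boundary (a := 0) (b := 1)
    (fun t _ => (hderiv t).continuousAt.continuousWithinAt)
    (fun t _ => (hderiv t).hasDerivWithinAt) (by simp)
    (fun t _ => (hparabola t).continuousAt.continuousWithinAt)
    (fun t _ => (hparabola t).hasDerivWithinAt)
    (fun t ht => hbound t ht.1) (Set.right_mem_Icc.2 zero_le_one)
  simp only [one_smul, add_sub_cancel, one_mul, one_pow, v] at hcompare
  linarith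

theorem norm_gradient_sq_le_of_lipschitzWith_gradient {f : E → ℝ} {K : NNReal} (hK : 0 < K)
    (hf : Differentiable ℝ f) (hlip : LipschitzWith K (gradient f)) {fstar : ℝ}
    (hfstar : ∀ y, fstar ≤ f y) (x : E) :
    ‖gradient f x‖ ^ 2 ≤ 2 * K * (f x - fstar) := by
  have hK_real : (0 : ℝ) < K := hK
  have hdescent := le_add_inner_gradient_add_sq_of_lipschitzWith_gradient hf hlip x
    (x - (K : ℝ)⁻¹ • gradient f x)
  rw [sub_sub_cancel_left, inner_neg_right, real_inner_smul_right, real_inner_self_eq_norm_sq,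
    norm_neg, norm_smul, Real.norm_of_nonneg (inv_nonneg.2 hK_real.le)] at hdescent
  have hdecrease : f (x - (K : ℝ)⁻¹ • gradient f x) ≤ f x - ‖gradient f x‖ ^ 2 / (2 * K) := by
    convert hdescent using 1; field_simp; ring
  have hgap : ‖gradient f x‖ ^ 2 / (2 * K) ≤ f x - fstar := by
    linarith [hfstar (x - (K : ℝ)⁻¹ • gradient f x)]
  rwa [div_le_iff₀ (by positivity), mul_comm] at hgap

section Moments

variable {Ω : Type*} [MeasurableSpace Ω] {μ : Measure Ω} [IsProbabilityMeasure μ]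

theorem integral_norm_sub_sq_eq {h : Ω → E} (hh : MemLp h 2 μ) (b : E) :
    ∫ ω, ‖h ω - b‖ ^ 2 ∂μ
      = ‖(∫ ω, h ω ∂μ) - b‖ ^ 2 + ∫ ω, ‖h ω - ∫ ω', h ω' ∂μ‖ ^ 2 ∂μ := by
  set m := ∫ ω, h ω ∂μ
  have hint : Integrable (fun ω => h ω - m) μ := (hh.integrable one_le_two).sub (integrable_const m)
  have hcross : ∫ ω, ⟪m - b, h ω - m⟫ ∂μ = 0 := by
    rw [integral_inner hint, integral_sub (hh.integrable one_le_two) (integrable_const m)]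
    simp [m]
  have hcross_int : Integrable (fun ω => 2 * ⟪m - b, h ω - m⟫) μ :=
    (hint.const_inner _).const_mul 2
  have hvar_int : Integrable (fun ω => ‖h ω - m‖ ^ 2) μ :=
    (hh.sub (memLp_const m)).integrable_norm_pow two_ne_zero
  calc ∫ ω, ‖h ω - b‖ ^ 2 ∂μ
      = ∫ ω, (‖m - b‖ ^ 2 + 2 * ⟪m - b, h ω - m⟫ + ‖h ω - m‖ ^ 2) ∂μ := by
        congr with ω
        rw [← norm_add_sq_real, sub_add_sub_cancel']
    _ = ‖m - b‖ ^ 2 + ∫ ω, ‖h ω - m‖ ^ 2 ∂μ := by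
        rw [integral_add (f := fun ω => ‖m - b‖ ^ 2 + 2 * ⟪m - b, h ω - m⟫)
            ((integrable_const _).add hcross_int) hvar_int,
          integral_add (integrable_const _) hcross_int,
          integral_const_mul, hcross]
        simp

theorem integral_norm_sub_sq_le {h : Ω → E} (hmeas : AEStronglyMeasurable h μ) {m : E}
    (hmean : ∫ ω, h ω ∂μ = m) {V : ℝ} (hvar : ∫ ω, ‖h ω - m‖ ^ 2 ∂μ ≤ V) (b : E) :
    ∫ ω, ‖h ω - b‖ ^ 2 ∂μ ≤ ‖m - b‖ ^ 2 + V := by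
  by_cases hsq : Integrable (fun ω => ‖h ω - b‖ ^ 2) μ
  · have hh : MemLp h 2 μ := by
      simpa using ((memLp_two_iff_integrable_sq_norm
        (hmeas.sub aestronglyMeasurable_const)).2 hsq).add (memLp_const b)
    rw [integral_norm_sub_sq_eq hh b, hmean]
    linarith
  · have hvar_nonneg : 0 ≤ ∫ ω, ‖h ω - m‖ ^ 2 ∂μ := integral_nonneg fun ω => sq_nonneg _
    rw [integral_undef hsq]
    linarith [sq_nonneg ‖m - b‖]

end Moments

end InnerProductSpace

/-- Second-moment bound for an unbiasedly compressed stochastic gradient (key step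
in the proof of Theorem 3.5): if `g` is an unbiased stochastic gradient at `x` with
variance bounded by `𝓛σ`, and `𝒞` is an unbiased compressor with
`E‖𝒞(y) - y‖² ≤ ω ‖y‖²`, then
`E‖𝒞(g) - ∇f(x)‖² ≤ 2 ω L (f x - f_*) + (ω + 1) 𝓛σ`. -/
theorem compressed_gradient_second_moment
    (d : ℕ) (f : EuclideanSpace ℝ (Fin d) → ℝ) (L : ℝ) (hL : 0 < L)
    (hf : Differentiable ℝ f)
    (hlip : LipschitzWith L.toNNReal (fun x => gradient f x))
    (fstar : ℝ) (hglb : IsGLB (Set.range f) fstar)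
    (x : EuclideanSpace ℝ (Fin d))
    (Ω Ω' : Type*) [MeasurableSpace Ω] [MeasurableSpace Ω']
    (μ : Measure Ω) (μ' : Measure Ω')
    [IsProbabilityMeasure μ] [IsProbabilityMeasure μ']
    (g : Ω → EuclideanSpace ℝ (Fin d)) (hg2 : MemLp g 2 μ)
    (hgmean : ∫ ω, g ω ∂μ = gradient f x)
    (Lσ : ℝ) (hgvar : ∫ ω, ‖g ω - gradient f x‖ ^ 2 ∂μ ≤ Lσ)
    (𝒞 : EuclideanSpace ℝ (Fin d) → Ω' → EuclideanSpace ℝ (Fin d))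
    (h𝒞meas : ∀ y, AEStronglyMeasurable (𝒞 y) μ')
    (ω₀ : ℝ) (hω₀ : 0 ≤ ω₀)
    (h𝒞mean : ∀ y, ∫ ω', 𝒞 y ω' ∂μ' = y)
    (h𝒞var : ∀ y, ∫ ω', ‖𝒞 y ω' - y‖ ^ 2 ∂μ' ≤ ω₀ * ‖y‖ ^ 2) :
    ∫ ω, ∫ ω', ‖𝒞 (g ω) ω' - gradient f x‖ ^ 2 ∂μ' ∂μ
      ≤ 2 * ω₀ * L * (f x - fstar) + (ω₀ + 1) * Lσ := by
  set b := gradient f x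
  have hgrad : ‖b‖ ^ 2 ≤ 2 * L * (f x - fstar) := by
    simpa [Real.coe_toNNReal L hL.le] using norm_gradient_sq_le_of_lipschitzWith_gradient
      (Real.toNNReal_pos.2 hL) hf hlip (fun y => hglb.1 ⟨y, rfl⟩) x
  have hcompress (y) : ∫ ω', ‖𝒞 y ω' - b‖ ^ 2 ∂μ' ≤ ‖y - b‖ ^ 2 + ω₀ * ‖y‖ ^ 2 :=
    integral_norm_sub_sq_le (h𝒞meas y) (h𝒞mean y) (h𝒞var y) b
  have hsecond : ∫ ω, ‖g ω‖ ^ 2 ∂μ = ‖b‖ ^ 2 + ∫ ω, ‖g ω - b‖ ^ 2 ∂μ := by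
    simpa [hgmean] using integral_norm_sub_sq_eq hg2 0
  have hdev_int : Integrable (fun ω => ‖g ω - b‖ ^ 2) μ :=
    (hg2.sub (memLp_const b)).integrable_norm_pow two_ne_zero
  have hsq_int : Integrable (fun ω => ‖g ω‖ ^ 2) μ := hg2.integrable_norm_pow two_ne_zero
  calc ∫ ω, ∫ ω', ‖𝒞 (g ω) ω' - b‖ ^ 2 ∂μ' ∂μ
      ≤ ∫ ω, (‖g ω - b‖ ^ 2 + ω₀ * ‖g ω‖ ^ 2) ∂μ :=
        integral_mono_of_nonneg (ae_of_all _ fun ω => integral_nonneg fun ω' => sq_nonneg _)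
          (hdev_int.add (hsq_int.const_mul ω₀)) (ae_of_all _ fun ω => hcompress (g ω))
    _ = ∫ ω, ‖g ω - b‖ ^ 2 ∂μ + ω₀ * (‖b‖ ^ 2 + ∫ ω, ‖g ω - b‖ ^ 2 ∂μ) := by
        rw [integral_add hdev_int (hsq_int.const_mul ω₀), integral_const_mul, hsecond]
    _ ≤ 2 * ω₀ * L * (f x - fstar) + (ω₀ + 1) * Lσ := by
        nlinarith [mul_le_mul_of_nonneg_left hgrad hω₀, mul_le_mul_of_nonneg_left hgvar hω₀]
end

section
/- Let η, L, μ, N, B, L̄σ, ω̄, W, β > 0 and define α := 1 + β·(W/L̄σ) + β·ω̄·ηL²/(2μN). Then 2μ − ηL²ω̄β/(αN) > 0 and the DCSGD asymptotic level with α·N agents equals the DSGD level: [ηL·(L̄σ + β·W)/(2B·αN)] / (2μ − ηL²·ω̄·β/(αN)) = ηL·L̄σ/(4μNB). -/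
/-- First scaling rule of Proposition 3.7 (agents versus compression): with
`α = 1 + β (W/L̄σ) + β ω̄ η L² / (2 μ N)`, the DCSGD asymptotic level with `α N`
agents equals the DSGD level `η L L̄σ / (4 μ N B)`. -/
theorem dcsgd_scaling_rule_agents_vs_compression
    (η L μ N B Lσbar ωbar W β : ℝ)
    (hη : 0 < η) (hL : 0 < L) (hμ : 0 < μ) (hN : 0 < N) (hB : 0 < B)
    (hLσ : 0 < Lσbar) (hω : 0 < ωbar) (hW : 0 < W) (hβ : 0 < β)
    (α : ℝ)
    (hα : α = 1 + β * (W / Lσbar) + β * ωbar * η * L ^ 2 / (2 * μ * N)) :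
    0 < 2 * μ - η * L ^ 2 * ωbar * β / (α * N) ∧
    (η * L * (Lσbar + β * W) / (2 * B * (α * N)))
        / (2 * μ - η * L ^ 2 * ωbar * β / (α * N))
      = η * L * Lσbar / (4 * μ * N * B) := by
  have hαpos : 0 < α := by
    rw [hα]; positivity
  have hden : 0 < 2 * μ - η * L ^ 2 * ωbar * β / (α * N) := by
    rw [sub_pos, div_lt_iff₀ (by positivity)]
    have : α * N = N + β * W * N / Lσbar + β * ωbar * η * L ^ 2 / (2 * μ) := by
      rw [hα]; field_simp
    rw [this]
    have h1 : η * L ^ 2 * ωbar * β = 2 * μ * (β * ωbar * η * L ^ 2 / (2 * μ)) := by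
      field_simp
    rw [h1]
    have : 0 < N + β * W * N / Lσbar := by positivity
    nlinarith [mul_pos hμ this]
  refine ⟨hden, ?_⟩
  have hαN : α * N ≠ 0 := by positivity
  rw [div_div, div_eq_div_iff (by positivity) (by positivity : (4:ℝ) * μ * N * B ≠ 0)]
  rw [hα]
  field_simp
  ring
end

section
/- Let η, L, μ, N, B, L̄σ, ω̄, W, β > 0 with 2μ > β·ω̄·ηL²/N, and define δ := 2μ·(L̄σ + β·W) / (L̄σ·(2μ − β·ω̄·ηL²/N)). Then the DCSGD asymptotic level with batch size δ·B equals the DSGD level: [ηL·(L̄σ + β·W)/(2·δB·N)] / (2μ − ηL²·ω̄·β/N) = ηL·L̄σ/(4μNB). -/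
/-! Substituting `δ` cancels the stability margin `D = 2μ − βω̄ηL²/N` from the DCSGD level, and
then the enlarged noise term `L̄σ + βW` cancels as well, leaving the DSGD level. -/

theorem level_div_div_scaled_batch_eq {K : Type*} [Field K] (a S σ μ N B D δ : K)
    (hS : S ≠ 0) (hD : D ≠ 0) (hδ : δ = 2 * μ * S / (σ * D)) :
    a * S / (2 * (δ * B) * N) / D = a * σ / (4 * μ * N * B) := by
  have hδD : δ * D = 2 * μ * S / σ := by
    rw [hδ, ← div_div, div_mul_cancel₀ _ hD]
  calc a * S / (2 * (δ * B) * N) / D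
      = a * S / (2 * B * N * (δ * D)) := by rw [div_div]; congr 1; ring
    _ = a * σ * S / (4 * μ * N * B * S) := by
        rw [hδD, mul_div_assoc', div_div_eq_mul_div]; ring
    _ = a * σ / (4 * μ * N * B) := mul_div_mul_right _ _ hS

theorem dcsgd_scaling_rule_batch_vs_compression_general
    (η L μ N B Lσbar ωbar W β : ℝ)
    (hLσ : 0 < Lσbar) (hW : 0 < W) (hβ : 0 < β)
    (hpos : β * ωbar * η * L ^ 2 / N < 2 * μ)
    (δ : ℝ)
    (hδ : δ = 2 * μ * (Lσbar + β * W)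
        / (Lσbar * (2 * μ - β * ωbar * η * L ^ 2 / N))) :
    (η * L * (Lσbar + β * W) / (2 * (δ * B) * N))
        / (2 * μ - η * L ^ 2 * ωbar * β / N)
      = η * L * Lσbar / (4 * μ * N * B) := by
  have hmargin : 2 * μ - η * L ^ 2 * ωbar * β / N = 2 * μ - β * ωbar * η * L ^ 2 / N := by ring
  rw [hmargin]
  exact level_div_div_scaled_batch_eq _ _ _ _ _ _ _ _ (by positivity) (sub_pos.2 hpos).ne' hδ

/-- Batch-size-versus-compression scaling rule of Proposition 3.7: with
`δ = 2μ(L̄σ + βW) / (L̄σ(2μ − βω̄ηL²/N))`, the DCSGD asymptotic level with batch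
size `δB` equals the DSGD level `η L L̄σ / (4 μ N B)`. -/
theorem dcsgd_scaling_rule_batch_vs_compression
    (η L μ N B Lσbar ωbar W β : ℝ)
    (hη : 0 < η) (hL : 0 < L) (hμ : 0 < μ) (hN : 0 < N) (hB : 0 < B)
    (hLσ : 0 < Lσbar) (hω : 0 < ωbar) (hW : 0 < W) (hβ : 0 < β)
    (hpos : β * ωbar * η * L ^ 2 / N < 2 * μ)
    (δ : ℝ)
    (hδ : δ = 2 * μ * (Lσbar + β * W)
        / (Lσbar * (2 * μ - β * ωbar * η * L ^ 2 / N))) :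
    (η * L * (Lσbar + β * W) / (2 * (δ * B) * N))
        / (2 * μ - η * L ^ 2 * ωbar * β / N)
      = η * L * Lσbar / (4 * μ * N * B) :=
  dcsgd_scaling_rule_batch_vs_compression_general η L μ N B Lσbar ωbar W β hLσ hW hβ hpos δ hδ
end

section
/- Let f : ℝ^d → ℝ be continuously differentiable, bounded below with infimum f_*, and μ-PL, i.e. ‖∇f(x)‖₂² ≥ 2μ(f(x) − f_*) for all x. Let X : [0, T] → ℝ^d be differentiable with X'(t) = −sign(∇f(X(t))) coordinatewise (with sign(0) = 0). Set S(t) := f(X(t)) − f_* and S₀ := S(0). Then for all t ∈ [0, T] with t ≤ 2√(S₀/μ), one has S(t) ≤ (1/4)·(√μ·t − 2√S₀)²; in particular S reaches 0 no later than t_* = 2√(S₀/μ) if T ≥ t_*. -/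
/-!
Along the flow, `d/dt f(X t) = -‖∇f(X t)‖₁ ≤ -‖∇f(X t)‖₂ ≤ -√(2μ S)` with `S = f ∘ X - f_*`.
The bound `(√μ t - 2√S₀)² / 4` solves `B' = -√μ √B`, `B 0 = S₀`, so a barrier argument
keeps `S` below it; the factor `√2` to spare makes the barrier strict at contact points.
-/

open Real Set

theorem Real.sign_mul_self (r : ℝ) : Real.sign r * r = |r| := by
  rcases lt_trichotomy r 0 with h | rfl | h
  · rw [sign_of_neg h, abs_of_neg h]; ring
  · simp
  · rw [sign_of_pos h, abs_of_pos h]; ring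

theorem EuclideanSpace.norm_le_sum_abs {ι : Type*} [Fintype ι] (x : EuclideanSpace ℝ ι) :
    ‖x‖ ≤ ∑ i, |x i| := by
  rw [EuclideanSpace.norm_eq, sqrt_le_left (Finset.sum_nonneg fun i _ => abs_nonneg _)]
  simpa only [Real.norm_eq_abs] using
    Finset.sum_sq_le_sq_sum_of_nonneg fun i _ => abs_nonneg (x i)

theorem inner_toLp_neg_sign {ι : Type*} [Fintype ι] (g : EuclideanSpace ℝ ι) :
    inner ℝ g (WithLp.toLp 2 fun i => -Real.sign (g i)) = -∑ i, |g i| := by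
  simp [PiLp.inner_apply, Real.sign_mul_self]

theorem HasDerivAt.comp_signGradientFlow {ι : Type*} [Fintype ι]
    {f : EuclideanSpace ℝ ι → ℝ} {X : ℝ → EuclideanSpace ℝ ι} {t : ℝ}
    (hf : DifferentiableAt ℝ f (X t))
    (hX : HasDerivAt X (WithLp.toLp 2 fun i => -Real.sign (gradient f (X t) i)) t) :
    HasDerivAt (fun s => f (X s)) (-∑ i, |gradient f (X t) i|) t := by
  have := hf.hasGradientAt.hasFDerivAt.comp_hasDerivAt t hX
  rwa [InnerProductSpace.toDual_apply_apply, inner_toLp_neg_sign] at this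

theorem le_of_deriv_lt_neg_mul_sqrt {S S' : ℝ → ℝ} {κ a b : ℝ} (hκ : 0 < κ) (hb : 0 ≤ b)
    (hS : ContinuousOn S (Icc 0 b)) (hS' : ∀ x ∈ Ico 0 b, HasDerivWithinAt S (S' x) (Ici x) x)
    (hdecay : ∀ x ∈ Ico 0 b, 0 < S x → S' x < -κ * √(S x))
    (h0 : S 0 ≤ a ^ 2) (hκb : κ * b ≤ 2 * a) :
    S b ≤ 1 / 4 * (κ * b - 2 * a) ^ 2 := by
  have hB : ∀ x, HasDerivAt (fun x => 1 / 4 * (κ * x - 2 * a) ^ 2)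
      (1 / 2 * κ * (κ * x - 2 * a)) x := fun x =>
    ((((hasDerivAt_id' x).const_mul κ).sub_const (2 * a)).pow 2 |>.const_mul (1 / 4)).congr_deriv
      (by norm_num; ring)
  refine image_le_of_deriv_right_lt_deriv_boundary hS hS' (by nlinarith) hB ?_ ⟨hb, le_rfl⟩
  intro x hx hcontact
  have hc : 0 < 2 * a - κ * x := by nlinarith [hx.2]
  have hsqrt : √(S x) = (2 * a - κ * x) / 2 := by
    rw [hcontact, sqrt_eq_iff_mul_self_eq] <;> nlinarith
  calc S' x < -κ * √(S x) := hdecay x hx (by rw [hcontact]; nlinarith)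
    _ = 1 / 2 * κ * (κ * x - 2 * a) := by rw [hsqrt]; ring

theorem dsignsgd_phase1_general
    (d : ℕ) (f : EuclideanSpace ℝ (Fin d) → ℝ) (hf : ContDiff ℝ 1 f)
    (fstar : ℝ) (hglb : IsGLB (Set.range f) fstar)
    (μ : ℝ) (hμ : 0 < μ)
    (hPL : ∀ x : EuclideanSpace ℝ (Fin d),
      2 * μ * (f x - fstar) ≤ ‖gradient f x‖ ^ 2)
    (T : ℝ)
    (X : ℝ → EuclideanSpace ℝ (Fin d))
    (hX : ∀ t ∈ Set.Icc (0 : ℝ) T,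
      HasDerivAt X
        (show EuclideanSpace ℝ (Fin d) from
          WithLp.toLp 2 (fun i => - Real.sign (gradient f (X t) i))) t) :
    (∀ t ∈ Set.Icc (0 : ℝ) T, t ≤ 2 * Real.sqrt ((f (X 0) - fstar) / μ) →
      f (X t) - fstar
        ≤ (1 / 4) * (Real.sqrt μ * t - 2 * Real.sqrt (f (X 0) - fstar)) ^ 2) ∧
    (2 * Real.sqrt ((f (X 0) - fstar) / μ) ≤ T →
      ∃ t ∈ Set.Icc (0 : ℝ) (2 * Real.sqrt ((f (X 0) - fstar) / μ)),
        f (X t) - fstar = 0) := by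
  have hgap : ∀ x, 0 ≤ f x - fstar := fun x => sub_nonneg.2 (hglb.1 ⟨x, rfl⟩)
  have hderiv : ∀ t ∈ Icc 0 T,
      HasDerivAt (fun s => f (X s) - fstar) (-∑ i, |gradient f (X t) i|) t := fun t ht =>
    ((hX t ht).comp_signGradientFlow (hf.differentiable one_ne_zero _)).sub_const fstar
  have hdecay : ∀ x, 0 < f x - fstar → -∑ i, |gradient f x i| < -√μ * √(f x - fstar) := by
    intro x hx
    have hnorm : √μ * √(f x - fstar) < ‖gradient f x‖ := by
      rw [← sqrt_mul hμ.le, ← sqrt_sq (norm_nonneg _)]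
      exact sqrt_lt_sqrt (by positivity) (by nlinarith [hPL x])
    linarith [(gradient f x).norm_le_sum_abs]
  have hbound : ∀ t ∈ Icc 0 T, t ≤ 2 * √((f (X 0) - fstar) / μ) →
      f (X t) - fstar ≤ 1 / 4 * (√μ * t - 2 * √(f (X 0) - fstar)) ^ 2 := by
    intro t ht htle
    have hsub : Icc 0 t ⊆ Icc 0 T := Icc_subset_Icc le_rfl ht.2
    refine le_of_deriv_lt_neg_mul_sqrt (sqrt_pos.2 hμ) ht.1
      (fun x hx => (hderiv x (hsub hx)).continuousAt.continuousWithinAt)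
      (fun x hx => (hderiv x (hsub (Ico_subset_Icc_self hx))).hasDerivWithinAt)
      (fun x _ => hdecay (X x)) (sq_sqrt (hgap _)).ge ?_
    rwa [sqrt_div (hgap _), mul_div_assoc', le_div_iff₀ (sqrt_pos.2 hμ), mul_comm] at htle
  refine ⟨hbound, fun hT => ⟨_, ⟨by positivity, le_rfl⟩, le_antisymm ?_ (hgap _)⟩⟩
  refine (hbound _ ⟨by positivity, hT⟩ le_rfl).trans_eq ?_
  rw [sqrt_div (hgap _)]
  field_simp
  ring

/-- Phase 1 of Theorem 3.12 (DSignSGD): along the sign-gradient flow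
`X' t = −sign(∇f(X t))` (coordinatewise), a μ-PL function satisfies
`f(X t) − f_* ≤ (1/4)(√μ t − 2√S₀)²` for `t ≤ 2√(S₀/μ)`, so the suboptimality
reaches `0` no later than `t_* = 2√(S₀/μ)`. -/
theorem dsignsgd_phase1
    (d : ℕ) (f : EuclideanSpace ℝ (Fin d) → ℝ) (hf : ContDiff ℝ 1 f)
    (fstar : ℝ) (hglb : IsGLB (Set.range f) fstar)
    (μ : ℝ) (hμ : 0 < μ)
    (hPL : ∀ x : EuclideanSpace ℝ (Fin d),
      2 * μ * (f x - fstar) ≤ ‖gradient f x‖ ^ 2)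
    (T : ℝ) (hT : 0 ≤ T)
    (X : ℝ → EuclideanSpace ℝ (Fin d))
    (hX : ∀ t ∈ Set.Icc (0 : ℝ) T,
      HasDerivAt X
        (show EuclideanSpace ℝ (Fin d) from
          WithLp.toLp 2 (fun i => - Real.sign (gradient f (X t) i))) t) :
    (∀ t ∈ Set.Icc (0 : ℝ) T, t ≤ 2 * Real.sqrt ((f (X 0) - fstar) / μ) →
      f (X t) - fstar
        ≤ (1 / 4) * (Real.sqrt μ * t - 2 * Real.sqrt (f (X 0) - fstar)) ^ 2) ∧
    (2 * Real.sqrt ((f (X 0) - fstar) / μ) ≤ T →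
      ∃ t ∈ Set.Icc (0 : ℝ) (2 * Real.sqrt ((f (X 0) - fstar) / μ)),
        f (X t) - fstar = 0) :=
  dsignsgd_phase1_general d f hf fstar hglb μ hμ hPL T X hX
end
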